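/- Let N > 0, 0 ≤ ε < 1/12, B₀ ≤ N/(18(1−ε)), and b, g ≥ 0 with b + g ≤ N/11. Then (B₀ + b)/(N + b − (N/11 − b)) < 1/6, i.e., the fraction of bad IDs never reaches 1/6 during an iteration. -/

import Mathlib

/-! Since `ε < 1/12`, the purge leaves `B₀ < 2N/33` bad IDs, and the budget gives `b ≤ N/11`.
Hence `6 (B₀ + b) < 4N/11 + 4N/11 < 10N/11 + 2b`, the denominator being `10N/11 + 2b`. -/

lemma div_eighteen_mul_one_sub_lt {N ε : ℝ} (hN : 0 < N) (hε : ε < 1 / 12) :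
    N / (18 * (1 - ε)) < 2 * N / 33 := by
  calc N / (18 * (1 - ε)) < N / (33 / 2) := div_lt_div_of_pos_left hN (by norm_num) (by linarith)
    _ = 2 * N / 33 := by ring

theorem bad_fraction_lt_sixth_general (N ε B₀ b g : ℝ)
    (hN : 0 < N) (hε : ε < 1 / 12)
    (hB : B₀ ≤ N / (18 * (1 - ε)))
    (hb : 0 ≤ b) (hg : 0 ≤ g) (hbg : b + g ≤ N / 11) :
    (B₀ + b) / (N + b - (N / 11 - b)) < 1 / 6 := by
  have hB' : B₀ < 2 * N / 33 := hB.trans_lt (div_eighteen_mul_one_sub_lt hN hε)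
  have hb' : b ≤ N / 11 := by linarith
  have hden : 0 < N + b - (N / 11 - b) := by linarith
  rw [div_lt_iff₀ hden]
  linarith

theorem bad_fraction_lt_sixth (N ε B₀ b g : ℝ)
    (hN : 0 < N) (hε0 : 0 ≤ ε) (hε : ε < 1 / 12)
    (hB : B₀ ≤ N / (18 * (1 - ε)))
    (hb : 0 ≤ b) (hg : 0 ≤ g) (hbg : b + g ≤ N / 11) :
    (B₀ + b) / (N + b - (N / 11 - b)) < 1 / 6 :=
  bad_fraction_lt_sixth_general N ε B₀ b g hN hε hB hb hg hbg
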